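/- (Reflection principle for ladder chains.) For every k ≥ 3 and every integer x with L+1 ≤ x ≤ U−3 (where U−L ≥ 4), P(B_k^x | L_k ≥ 3) = P(B_{k−1}^{x+2} | ξ_1 = 1), where L_k denotes the least index l ∈ {1,…,k} with ξ_l = −1, with L_k = k+1 if ξ_l = 1 for all l ≤ k. -/

import Mathlib

/-!
On `{ξ₁ = ξ₂ = 1}` the walk started at `x` first moves to `x + 1`, still strictly inside
`(L, U)`, and from then on it follows, one time unit late, the walk driven by the shifted
sequence `(ξ_{n+1})` started at `x + 2`: both next reach `x + 3` (the shifted walk by a `+1` step,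
since `ξ₂ = 1`), and their later steps see the same pairs `(ξ_{n-1}, ξ_n)`. So
`{ξ₁ = ξ₂ = 1} ∩ B_k^x` is `{ξ₁ = 1} ∩ {ξ₂ = 1} ∩ B_{k-1}^{x+2}(ξ_{·+1})`, an event in `ξ₁` and
the window `(ξ₂, …, ξ_k)`. The factor `{ξ₁ = 1}` is independent of that window and cancels from
the conditional probability, and the window has the same law as `(ξ₁, …, ξ_{k-1})`, which turns
what remains into `P(B_{k-1}^{x+2} | ξ₁ = 1)`.
-/

open MeasureTheory ProbabilityTheory Filter
open scoped ENNReal Classical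

noncomputable section

variable {Ω : Type*} [MeasurableSpace Ω]

/-- The `k`-th step of the ladder chain `L(2,2,p)` built from the driving
sequence `ξ` (indexed from 1): `X₁ = ±1` according to `ξ₁`, and for `k ≥ 2`,
`X_k = -1` if `ξ_k = -1`, `X_k = 2` if `ξ_k = ξ_{k-1} = 1`, and `X_k = 1`
if `ξ_k = 1, ξ_{k-1} = -1`. -/
def ladderX (ξ : ℕ → Ω → ℤ) (k : ℕ) (ω : Ω) : ℤ :=
  if k = 1 then (if ξ 1 ω = 1 then 1 else -1)
  else if ξ k ω = -1 then -1
  else if ξ (k - 1) ω = 1 then 2 else 1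

/-- The ladder chain `S_n = X₁ + ⋯ + X_n` (with `S_0 = 0`). -/
def ladderS (ξ : ℕ → Ω → ℤ) (n : ℕ) (ω : Ω) : ℤ :=
  ∑ k ∈ Finset.Icc 1 n, ladderX ξ k ω

/-- The truncated exit time `τ_k^x`: the least `l ≤ k` with `S_l^x ≤ L` or
`S_l^x ≥ U`, and `k` if there is no such `l`. -/
def ladderTau (ξ : ℕ → Ω → ℤ) (L U x : ℤ) (k : ℕ) (ω : Ω) : ℕ :=
  if ∃ l ≤ k, (x + ladderS ξ l ω ≤ L ∨ U ≤ x + ladderS ξ l ω)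
  then sInf {l | l ≤ k ∧ (x + ladderS ξ l ω ≤ L ∨ U ≤ x + ladderS ξ l ω)}
  else k

/-- The event `A_k^x`: the walk started at `x` exits through the lower
barrier `L` within the first `k` steps. -/
def ladderA (ξ : ℕ → Ω → ℤ) (L U x : ℤ) (k : ℕ) : Set Ω :=
  ⋃ l ∈ Finset.range (k + 1),
    {ω | ladderTau ξ L U x k ω = l ∧ x + ladderS ξ l ω ≤ L}

/-- The event `B_k^x`: the walk started at `x` exits through the upper
barrier `U` within the first `k` steps. -/
def ladderB (ξ : ℕ → Ω → ℤ) (L U x : ℤ) (k : ℕ) : Set Ω :=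
  ⋃ l ∈ Finset.range (k + 1),
    {ω | ladderTau ξ L U x k ω = l ∧ U ≤ x + ladderS ξ l ω}

/-- `L_k`: the least index `l ∈ {1, …, k}` with `ξ_l = -1`, and `k + 1` if
`ξ_l = 1` for all `l ≤ k`. -/
def ladderLk (ξ : ℕ → Ω → ℤ) (k : ℕ) (ω : Ω) : ℕ :=
  if ∃ l, 1 ≤ l ∧ l ≤ k ∧ ξ l ω = -1
  then sInf {l | 1 ≤ l ∧ l ≤ k ∧ ξ l ω = -1}
  else k + 1

def ExitsUpWithin (L U : ℤ) (f : ℕ → ℤ) (k : ℕ) : Prop :=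
  ∃ l ≤ k, U ≤ f l ∧ ∀ j < l, f j ∈ Set.Ioo L U

section ExitsUpWithin

variable {L U : ℤ} {f g : ℕ → ℤ} {k : ℕ}

lemma ExitsUpWithin.congr (h : ∀ l ≤ k, f l = g l) (hf : ExitsUpWithin L U f k) :
    ExitsUpWithin L U g k := by
  obtain ⟨l, hl, hU, hpre⟩ := hf
  exact ⟨l, hl, h l hl ▸ hU, fun j hj => h j (by omega) ▸ hpre j hj⟩

lemma exitsUpWithin_congr (h : ∀ l ≤ k, f l = g l) :
    ExitsUpWithin L U f k ↔ ExitsUpWithin L U g k :=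
  ⟨.congr h, .congr fun l hl => (h l hl).symm⟩

lemma exitsUpWithin_succ_iff (hf₀ : f 0 ∈ Set.Ioo L U) (hf₁ : f 1 ∈ Set.Ioo L U)
    (hg₀ : g 0 ∈ Set.Ioo L U) (hfg : ∀ l, 1 ≤ l → g l = f (l + 1)) :
    ExitsUpWithin L U f (k + 1) ↔ ExitsUpWithin L U g k := by
  constructor
  · rintro ⟨l, hl, hU, hpre⟩
    obtain ⟨l, rfl⟩ : ∃ l', l = l' + 2 := by
      refine ⟨l - 2, ?_⟩
      rcases l with _ | _ | l
      · exact absurd hU hf₀.2.not_ge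
      · exact absurd hU hf₁.2.not_ge
      · rfl
    refine ⟨l + 1, by omega, (hfg _ le_add_self).symm ▸ hU, fun j hj => ?_⟩
    rcases j with _ | j
    · exact hg₀
    · rw [hfg _ le_add_self]; exact hpre _ (by omega)
  · rintro ⟨l, hl, hU, hpre⟩
    obtain ⟨l, rfl⟩ : ∃ l', l = l' + 1 := by
      refine ⟨l - 1, ?_⟩
      rcases l with _ | l
      · exact absurd hU hg₀.2.not_ge
      · rfl
    refine ⟨l + 2, by omega, hfg _ le_add_self ▸ hU, fun j hj => ?_⟩
    rcases j with _ | _ | j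
    · exact hf₀
    · exact hf₁
    · rw [← hfg _ le_add_self]; exact hpre _ (by omega)

end ExitsUpWithin

section Ladder

variable {α α' : Type*} {ξ : ℕ → α → ℤ} {η : ℕ → α' → ℤ} {L U x : ℤ} {k : ℕ} {ω : α} {ω' : α'}

lemma ladderS_zero : ladderS ξ 0 ω = 0 := by
  simp [ladderS]

lemma ladderS_succ (n : ℕ) : ladderS ξ (n + 1) ω = ladderS ξ n ω + ladderX ξ (n + 1) ω :=
  Finset.sum_Icc_succ_top (by omega) _

lemma ladderTau_le : ladderTau ξ L U x k ω ≤ k := by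
  unfold ladderTau
  split_ifs with hex
  · exact (Nat.sInf_mem hex).1
  · exact le_rfl

lemma mem_ladderB_iff :
    ω ∈ ladderB ξ L U x k ↔ ExitsUpWithin L U (fun l => x + ladderS ξ l ω) k := by
  have hB : ω ∈ ladderB ξ L U x k ↔ U ≤ x + ladderS ξ (ladderTau ξ L U x k ω) ω := by
    simp only [ladderB, Set.mem_iUnion, Finset.mem_range, Set.mem_ofPred_eq]
    constructor
    · rintro ⟨_, _, rfl, hU⟩
      exact hU
    · exact fun hU => ⟨_, Nat.lt_succ_of_le ladderTau_le, rfl, hU⟩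
  rw [hB, ladderTau]
  split_ifs with hex
  · have hmem := Nat.sInf_mem hex
    constructor
    · intro hU
      refine ⟨_, hmem.1, hU, fun j hj => ?_⟩
      have hj' : ¬(j ≤ k ∧ (x + ladderS ξ j ω ≤ L ∨ U ≤ x + ladderS ξ j ω)) :=
        Nat.notMem_of_lt_sInf hj
      push Not at hj'
      exact hj' (hj.le.trans hmem.1)
    · rintro ⟨l, hl, hU, hpre⟩
      have hτ : sInf {l | l ≤ k ∧ (x + ladderS ξ l ω ≤ L ∨ U ≤ x + ladderS ξ l ω)} = l := by
        refine le_antisymm (Nat.sInf_le ⟨hl, .inr hU⟩) (not_lt.1 fun hlt => ?_)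
        obtain ⟨hL, hU'⟩ := hpre _ hlt
        exact hmem.2.elim hL.not_ge hU'.not_ge
      rwa [hτ]
  · push Not at hex
    exact ⟨fun hU => absurd hU (hex k le_rfl).2.not_ge,
      fun ⟨l, hl, hU, _⟩ => absurd hU (hex l hl).2.not_ge⟩

lemma ladderX_congr (h : ∀ n, 1 ≤ n → n ≤ k → ξ n ω = η n ω') {j : ℕ} (hj₁ : 1 ≤ j)
    (hjk : j ≤ k) : ladderX ξ j ω = ladderX η j ω' := by
  rcases eq_or_ne j 1 with rfl | hj
  · simp [ladderX, h 1 le_rfl hjk]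
  · simp only [ladderX, if_neg hj, h j hj₁ hjk, h (j - 1) (by omega) (by omega)]

lemma ladderS_congr (h : ∀ n, 1 ≤ n → n ≤ k → ξ n ω = η n ω') {l : ℕ} (hl : l ≤ k) :
    ladderS ξ l ω = ladderS η l ω' :=
  Finset.sum_congr rfl fun _ hj => ladderX_congr h (Finset.mem_Icc.1 hj).1
    ((Finset.mem_Icc.1 hj).2.trans hl)

lemma ladderB_congr (h : ∀ n, 1 ≤ n → n ≤ k → ξ n ω = η n ω') :
    ω ∈ ladderB ξ L U x k ↔ ω' ∈ ladderB η L U x k := by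
  rw [mem_ladderB_iff, mem_ladderB_iff]
  exact exitsUpWithin_congr fun l hl => by rw [ladderS_congr h hl]

lemma ladderS_shift_add_two (h₁ : ξ 1 ω = 1) (h₂ : ξ 2 ω = 1) {l : ℕ} (hl : 1 ≤ l) :
    ladderS (fun n => ξ (n + 1)) l ω + 2 = ladderS ξ (l + 1) ω := by
  induction l, hl using Nat.le_induction with
  | base => simp [ladderS, Finset.sum_Icc_succ_top, ladderX, h₁, h₂]
  | succ l hl ih =>
    have hX : ladderX (fun n => ξ (n + 1)) (l + 1) ω = ladderX ξ (l + 2) ω := by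
      simp only [ladderX, if_neg (show l + 1 ≠ 1 by omega), if_neg (show l + 2 ≠ 1 by omega)]
      rfl
    rw [ladderS_succ, ladderS_succ (l + 1), ← ih, hX]
    ring

lemma mem_ladderB_succ_iff_shift (h₁ : ξ 1 ω = 1) (h₂ : ξ 2 ω = 1) (hx₁ : L < x)
    (hx₂ : x + 3 ≤ U) :
    ω ∈ ladderB ξ L U x (k + 1) ↔ ω ∈ ladderB (fun n => ξ (n + 1)) L U (x + 2) k := by
  have hS₁ : ladderS ξ 1 ω = 1 := by simp [ladderS, ladderX, h₁]
  rw [mem_ladderB_iff, mem_ladderB_iff]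
  refine exitsUpWithin_succ_iff ?_ ?_ ?_ fun l hl => ?_
  · simp only [ladderS_zero]; constructor <;> omega
  · simp only [hS₁]; constructor <;> omega
  · simp only [ladderS_zero]; constructor <;> omega
  · simp only [← ladderS_shift_add_two h₁ h₂ hl]; ring

lemma three_le_ladderLk_iff (hval : ∀ n, ξ n ω = 1 ∨ ξ n ω = -1) (hk : 2 ≤ k) :
    3 ≤ ladderLk ξ k ω ↔ ξ 1 ω = 1 ∧ ξ 2 ω = 1 := by
  have hval' : ∀ n, ξ n ω ≠ -1 ↔ ξ n ω = 1 := fun n => by rcases hval n with h | h <;> simp [h]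
  unfold ladderLk
  split_ifs with hex
  · set T : Set ℕ := {l | 1 ≤ l ∧ l ≤ k ∧ ξ l ω = -1}
    obtain ⟨hl₁, -, hl⟩ : sInf T ∈ T := Nat.sInf_mem hex
    rw [← hval', ← hval']
    constructor
    · intro h3
      exact ⟨fun h => absurd (Nat.sInf_le (show 1 ∈ T from ⟨le_rfl, by omega, h⟩)) (by omega),
        fun h => absurd (Nat.sInf_le (show 2 ∈ T from ⟨one_le_two, hk, h⟩)) (by omega)⟩
    · rintro ⟨h₁, h₂⟩
      by_contra hlt
      interval_cases sInf T <;> contradiction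
  · push Not at hex
    exact iff_of_true (by omega)
      ⟨(hval' 1).1 (hex 1 le_rfl (by omega)), (hval' 2).1 (hex 2 one_le_two hk)⟩

def window {β : Type*} (ξ : ℕ → α → β) (j m : ℕ) (ω : α) : Fin m → β := fun i => ξ (j + i) ω

-- A window is read as a driving sequence indexed from 1, like `ξ`: its `n`-th term is `v (n - 1)`.
def windowPath (m n : ℕ) (v : Fin m → ℤ) : ℤ :=
  if h : n - 1 < m then v ⟨n - 1, h⟩ else 0

lemma ladderB_shift_eq_preimage_window (ξ : ℕ → α → ℤ) (j k : ℕ) (L U x : ℤ) :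
    ladderB (fun n => ξ (n + j)) L U x k = window ξ (j + 1) k ⁻¹' ladderB (windowPath k) L U x k :=
  Set.ext fun _ => ladderB_congr fun n hn₁ hnk => by
    simp only [window, windowPath, dif_pos (show n - 1 < k by omega)]
    congr 1
    omega

end Ladder

section Window

variable {β : Type*} [MeasurableSpace β] {P : Measure Ω} {ξ : ℕ → Ω → β}

lemma measurable_window (hmeas : ∀ n, Measurable (ξ n)) (j m : ℕ) :
    Measurable (window ξ j m) :=
  measurable_pi_lambda _ fun i => hmeas (j + i)

lemma map_window_eq_pi (hmeas : ∀ n, Measurable (ξ n)) (hindep : iIndepFun ξ P)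
    {ν : Measure β} {j : ℕ} (hlaw : ∀ n, j ≤ n → P.map (ξ n) = ν) (m : ℕ) :
    P.map (window ξ j m) = Measure.pi fun _ => ν := by
  have h := (hindep.precomp (g := fun i : Fin m => j + i) fun _ _ h => Fin.ext (by simpa using h)
    ).map_fun_eq_pi_map fun i => (hmeas _).aemeasurable
  simp only [hlaw _ (Nat.le_add_right _ _)] at h
  exact h

lemma indepFun_window (hmeas : ∀ n, Measurable (ξ n)) (hindep : iIndepFun ξ P) {i j : ℕ}
    (hij : i < j) (m : ℕ) : IndepFun (ξ i) (window ξ j m) P := by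
  have h := hindep.indepFun_finset {i} (Finset.Ico j (j + m))
    (Finset.disjoint_singleton_left.2 (by simp only [Finset.mem_Ico]; omega)) hmeas
  exact h.comp (measurable_pi_apply ⟨i, Finset.mem_singleton_self i⟩)
    (measurable_pi_lambda (fun v (k : Fin m) => v ⟨j + k, by simp⟩) fun _ => measurable_pi_apply _)

lemma measure_preimage_inter_window_succ (hmeas : ∀ n, Measurable (ξ n))
    (hindep : iIndepFun ξ P) {j : ℕ} (hlaw : ∀ n, j ≤ n → P.map (ξ n) = P.map (ξ j))
    {A : Set β} (hA : MeasurableSet A) {m : ℕ} {E : Set (Fin m → β)} (hE : MeasurableSet E) :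
    P (ξ j ⁻¹' A ∩ window ξ (j + 1) m ⁻¹' E) = P (ξ j ⁻¹' A) * P (window ξ j m ⁻¹' E) := by
  rw [(indepFun_window hmeas hindep j.lt_succ_self m).measure_inter_preimage_eq_mul _ _ hA hE,
    ← Measure.map_apply (measurable_window hmeas _ _) hE,
    ← Measure.map_apply (measurable_window hmeas _ _) hE, map_window_eq_pi hmeas hindep hlaw,
    map_window_eq_pi hmeas hindep fun n hn => hlaw n (by omega)]

lemma cond_preimage_inter_window_succ [IsFiniteMeasure P] (hmeas : ∀ n, Measurable (ξ n))
    (hindep : iIndepFun ξ P) {j : ℕ} (hlaw : ∀ n, j ≤ n → P.map (ξ n) = P.map (ξ j))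
    {A : Set β} (hA : MeasurableSet A) (hA₀ : P (ξ j ⁻¹' A) ≠ 0) {m : ℕ}
    {E₁ E : Set (Fin m → β)} (hE₁ : MeasurableSet E₁) (hE : MeasurableSet E) :
    P[window ξ (j + 1) m ⁻¹' E | ξ j ⁻¹' A ∩ window ξ (j + 1) m ⁻¹' E₁]
      = P[window ξ j m ⁻¹' E | window ξ j m ⁻¹' E₁] := by
  have hW := measurable_window hmeas
  rw [cond_apply ((hmeas j hA).inter (hW _ _ hE₁)), cond_apply (hW _ _ hE₁), Set.inter_assoc,
    ← Set.preimage_inter, ← Set.preimage_inter,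
    measure_preimage_inter_window_succ hmeas hindep hlaw hA (hE₁.inter hE),
    measure_preimage_inter_window_succ hmeas hindep hlaw hA hE₁,
    ENNReal.mul_inv (.inl hA₀) (.inl (measure_ne_top _ _)), mul_mul_mul_comm,
    ENNReal.inv_mul_cancel hA₀ (measure_ne_top _ _), one_mul]

end Window

lemma map_eq_map_of_eq_one_or_neg_one {P : Measure Ω} [IsProbabilityMeasure P] {X Y : Ω → ℤ}
    (hX : Measurable X) (hY : Measurable Y) (hXv : ∀ ω, X ω = 1 ∨ X ω = -1)
    (hYv : ∀ ω, Y ω = 1 ∨ Y ω = -1) (h : P (X ⁻¹' {1}) = P (Y ⁻¹' {1})) :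
    P.map X = P.map Y := by
  have preimage_eq {Z : Ω → ℤ} (hZv : ∀ ω, Z ω = 1 ∨ Z ω = -1) (z : ℤ) :
      Z ⁻¹' {z} = if z = 1 then Z ⁻¹' {1} else if z = -1 then (Z ⁻¹' {1})ᶜ else ∅ := by
    ext ω
    rcases hZv ω with h | h <;> split_ifs <;> simp_all [eq_comm]
  refine Measure.ext_of_singleton fun z => ?_
  rw [Measure.map_apply hX (.singleton z), Measure.map_apply hY (.singleton z),
    preimage_eq hXv, preimage_eq hYv]
  split_ifs
  · exact h
  · rw [prob_compl_eq_one_sub (hX (.singleton 1)), prob_compl_eq_one_sub (hY (.singleton 1)), h]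
  · simp

theorem ladder_reflection_principle_general (p : ℝ) (hp0 : 0 < p)
    (P : Measure Ω) [IsProbabilityMeasure P]
    (ξ : ℕ → Ω → ℤ) (hmeas : ∀ n, Measurable (ξ n))
    (hindep : iIndepFun ξ P)
    (hval : ∀ n ω, ξ n ω = 1 ∨ ξ n ω = -1)
    (hprob : ∀ n, 1 ≤ n → P {ω | ξ n ω = 1} = ENNReal.ofReal p)
    (L U : ℤ) (k : ℕ) (hk : 3 ≤ k)
    (x : ℤ) (hx1 : L + 1 ≤ x) (hx2 : x ≤ U - 3) :
    P[|{ω | 3 ≤ ladderLk ξ k ω}] (ladderB ξ L U x k)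
      = P[|{ω | ξ 1 ω = 1}] (ladderB ξ L U (x + 2) (k - 1)) := by
  obtain ⟨m, rfl⟩ : ∃ m, k = m + 1 := ⟨k - 1, by omega⟩
  have hm : 0 < m := by omega
  rw [Nat.add_sub_cancel]
  set E₁ : Set (Fin m → ℤ) := {v | v ⟨0, hm⟩ = 1}
  set E : Set (Fin m → ℤ) := ladderB (windowPath m) L U (x + 2) m
  have hlaw : ∀ n, 1 ≤ n → P.map (ξ n) = P.map (ξ 1) := fun n hn =>
    map_eq_map_of_eq_one_or_neg_one (hmeas n) (hmeas 1) (hval n) (hval 1)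
      ((hprob n hn).trans (hprob 1 le_rfl).symm)
  have hC : {ω | 3 ≤ ladderLk ξ (m + 1) ω} = ξ 1 ⁻¹' {1} ∩ window ξ 2 m ⁻¹' E₁ :=
    Set.ext fun ω => three_le_ladderLk_iff (hval · ω) (by omega)
  have hCB : (ξ 1 ⁻¹' {1} ∩ window ξ 2 m ⁻¹' E₁) ∩ ladderB ξ L U x (m + 1)
      = (ξ 1 ⁻¹' {1} ∩ window ξ 2 m ⁻¹' E₁) ∩ window ξ 2 m ⁻¹' E := by
    ext ω
    refine and_congr_right fun ⟨h₁, h₂⟩ => ?_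
    rw [mem_ladderB_succ_iff_shift h₁ h₂ (by omega) (by omega), ladderB_shift_eq_preimage_window]
  have hC_meas : MeasurableSet (ξ 1 ⁻¹' {1} ∩ window ξ 2 m ⁻¹' E₁) :=
    (hmeas 1 (.singleton 1)).inter (measurable_window hmeas 2 m .of_discrete)
  have hp₁ : P (ξ 1 ⁻¹' {1}) ≠ 0 := by
    simpa [Set.preimage, hprob 1 le_rfl] using hp0
  have hB : ladderB ξ L U (x + 2) m = window ξ 1 m ⁻¹' E :=
    ladderB_shift_eq_preimage_window ξ 0 m L U (x + 2)
  rw [hC, ← cond_inter_self hC_meas, hCB, cond_inter_self hC_meas, hB]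
  exact cond_preimage_inter_window_succ hmeas hindep hlaw (.singleton 1) hp₁
    .of_discrete .of_discrete

/-- reflection principle for ladder chains. For `k ≥ 3`
and `L + 1 ≤ x ≤ U - 3`, `P(B_k^x | L_k ≥ 3) = P(B_(k-1)^(x+2) | ξ₁ = 1)`. -/
theorem ladder_reflection_principle (p : ℝ) (hp0 : 0 < p) (hp1 : p < 1)
    (P : Measure Ω) [IsProbabilityMeasure P]
    (ξ : ℕ → Ω → ℤ) (hmeas : ∀ n, Measurable (ξ n))
    (hindep : iIndepFun ξ P)
    (hval : ∀ n ω, ξ n ω = 1 ∨ ξ n ω = -1)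
    (hprob : ∀ n, 1 ≤ n → P {ω | ξ n ω = 1} = ENNReal.ofReal p)
    (L U : ℤ) (hLU : U - L ≥ 4) (k : ℕ) (hk : 3 ≤ k)
    (x : ℤ) (hx1 : L + 1 ≤ x) (hx2 : x ≤ U - 3) :
    P[|{ω | 3 ≤ ladderLk ξ k ω}] (ladderB ξ L U x k)
      = P[|{ω | ξ 1 ω = 1}] (ladderB ξ L U (x + 2) (k - 1)) :=
  ladder_reflection_principle_general p hp0 P ξ hmeas hindep hval hprob L U k hk x hx1 hx2

end
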